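/- Let d ≥ 1, let f : ℝ^d → ℝ be differentiable and L-gradient Lipschitz with L > 0, let x ∈ ℝ^d, let ρ > 0, and let s be a Rademacher random vector in ℝ^d. Define the random step size α(s) = |f(x + ρs) − f(x − ρs)|/(2ρLd). Then E[min(f(x + α(s)s), f(x − α(s)s))] ≤ f(x) − ‖∇f(x)‖²/(4Ld) + (L d ρ²)/8. -/

import Mathlib

/-!
By the descent lemma, a step of length `α` along `±s` changes `f` by `∓α⟪∇f x, s⟫` up to
`Lα²‖s‖²/2`, so the better of the two trial points gains at least `α|⟪∇f x, s⟫| - Lα²d/2`.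
The same lemma shows that `f (x + ρs) - f (x - ρs)` estimates `2ρ⟪∇f x, s⟫` to within `Lρ²d`,
so `α(s)` is within `ρ/2` of the optimal step `|⟪∇f x, s⟫|/(Ld)`, and the gain is at least
`⟪∇f x, s⟫²/(2Ld) - Ldρ²/8`. For a Rademacher vector `E⟪g, s⟫² = ‖g‖²`, which yields the
bound even with `2Ld` in place of `4Ld`.
-/

/-- The vector in `ℝ^d` with `+1` in coordinates where `e` is `true`
and `-1` where `e` is `false`; a Rademacher random vector is uniform over these. -/
noncomputable def signVec {d : ℕ} (e : Fin d → Bool) : EuclideanSpace ℝ (Fin d) :=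
  WithLp.toLp 2 (fun i => if e i then 1 else -1)

open scoped RealInnerProductSpace

theorem neg_mul_abs_add_half_mul_sq_le {a D ρ c : ℝ} (hρ : 0 < ρ) (hc : 0 < c)
    (hD : |D - 2 * ρ * a| ≤ c * ρ ^ 2) :
    -(|D| / (2 * ρ * c) * |a|) + c / 2 * (|D| / (2 * ρ * c)) ^ 2 ≤
      c * ρ ^ 2 / 8 - a ^ 2 / (2 * c) := by
  set u := |D| / (2 * ρ)
  have hu : abs (u - |a|) ≤ c * ρ / 2 := by
    have h := (abs_abs_sub_abs_le_abs_sub D (2 * ρ * a)).trans hD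
    rw [abs_mul, abs_of_pos (by positivity : 0 < 2 * ρ)] at h
    have : u - |a| = (|D| - 2 * ρ * |a|) / (2 * ρ) := by simp only [u]; field_simp
    rw [this, abs_div, abs_of_pos (by positivity : 0 < 2 * ρ), div_le_iff₀ (by positivity)]
    linarith
  have hsq : (u - |a|) ^ 2 ≤ (c * ρ / 2) ^ 2 := by
    simpa only [sq_abs] using pow_le_pow_left₀ (abs_nonneg _) hu 2
  have hα : |D| / (2 * ρ * c) = u / c := by simp only [u]; field_simp
  calc -(|D| / (2 * ρ * c) * |a|) + c / 2 * (|D| / (2 * ρ * c)) ^ 2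
      = ((u - |a|) ^ 2 - a ^ 2) / (2 * c) := by rw [hα, ← sq_abs a]; field_simp; ring
    _ ≤ ((c * ρ / 2) ^ 2 - a ^ 2) / (2 * c) := by gcongr
    _ = c * ρ ^ 2 / 8 - a ^ 2 / (2 * c) := by field_simp; ring

section Smooth

variable {E : Type*} [NormedAddCommGroup E] [InnerProductSpace ℝ E] [CompleteSpace E]
  {f : E → ℝ} {L : ℝ}

theorem abs_sub_sub_inner_gradient_le (hf : Differentiable ℝ f)
    (hlip : ∀ x y, ‖gradient f x - gradient f y‖ ≤ L * ‖x - y‖) (x v : E) :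
    |f (x + v) - f x - ⟪gradient f x, v⟫| ≤ L / 2 * ‖v‖ ^ 2 := by
  set φ : ℝ → ℝ := fun t => f (x + t • v) - f x - t * ⟪gradient f x, v⟫
  have hφ : ∀ t, HasDerivAt φ ⟪gradient f (x + t • v) - gradient f x, v⟫ t := by
    intro t
    have hline : HasDerivAt (fun t : ℝ => x + t • v) v t := by
      simpa using ((hasDerivAt_id t).smul_const v).const_add x
    have hft := ((hf _).hasGradientAt.hasFDerivAt.comp_hasDerivAt t hline)
    refine ((hft.sub_const (f x)).sub ((hasDerivAt_id t).mul_const ⟪gradient f x, v⟫)).congr_deriv ?_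
    simp [inner_sub_left]
  have hB : ∀ t, HasDerivAt (fun t : ℝ => L / 2 * ‖v‖ ^ 2 * t ^ 2) (L * ‖v‖ ^ 2 * t) t := by
    intro t
    refine ((hasDerivAt_pow 2 t).const_mul (L / 2 * ‖v‖ ^ 2)).congr_deriv ?_
    ring
  have hbound : ∀ t ∈ Set.Ico (0 : ℝ) 1,
      ‖⟪gradient f (x + t • v) - gradient f x, v⟫‖ ≤ L * ‖v‖ ^ 2 * t := by
    rintro t ⟨ht, -⟩
    calc ‖⟪gradient f (x + t • v) - gradient f x, v⟫‖
        ≤ ‖gradient f (x + t • v) - gradient f x‖ * ‖v‖ := norm_inner_le_norm _ _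
      _ ≤ L * ‖t • v‖ * ‖v‖ := by
          gcongr
          simpa using hlip (x + t • v) x
      _ = L * ‖v‖ ^ 2 * t := by rw [norm_smul, Real.norm_of_nonneg ht]; ring
  have := image_norm_le_of_norm_deriv_right_le_deriv_boundary
    (fun t _ => (hφ t).continuousAt.continuousWithinAt) (fun t _ => (hφ t).hasDerivWithinAt)
    (by simp [φ]) hB hbound (Set.right_mem_Icc.2 zero_le_one)
  simpa [φ] using this

theorem abs_sub_sub_two_mul_inner_gradient_le (hf : Differentiable ℝ f)
    (hlip : ∀ x y, ‖gradient f x - gradient f y‖ ≤ L * ‖x - y‖) (x s : E) (ρ : ℝ) :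
    |f (x + ρ • s) - f (x - ρ • s) - 2 * ρ * ⟪gradient f x, s⟫| ≤ L * ρ ^ 2 * ‖s‖ ^ 2 := by
  have h₁ := abs_sub_sub_inner_gradient_le hf hlip x (ρ • s)
  have h₂ := abs_sub_sub_inner_gradient_le hf hlip x (-(ρ • s))
  rw [← sub_eq_add_neg, inner_neg_right, norm_neg] at h₂
  simp only [inner_smul_right, norm_smul, mul_pow, Real.norm_eq_abs, sq_abs] at h₁ h₂
  rw [abs_le] at h₁ h₂ ⊢
  constructor <;> linarith

theorem min_le_sub_abs_mul_inner_gradient (hf : Differentiable ℝ f)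
    (hlip : ∀ x y, ‖gradient f x - gradient f y‖ ≤ L * ‖x - y‖) (x s : E) (t : ℝ) :
    min (f (x + t • s)) (f (x - t • s)) ≤
      f x - |t * ⟪gradient f x, s⟫| + L / 2 * t ^ 2 * ‖s‖ ^ 2 := by
  have h₁ := abs_sub_sub_inner_gradient_le hf hlip x (t • s)
  have h₂ := abs_sub_sub_inner_gradient_le hf hlip x (-(t • s))
  rw [← sub_eq_add_neg, inner_neg_right, norm_neg] at h₂
  simp only [inner_smul_right, norm_smul, mul_pow, Real.norm_eq_abs, sq_abs] at h₁ h₂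
  rw [abs_le] at h₁ h₂
  rcases abs_cases (t * ⟪gradient f x, s⟫) with ⟨h, -⟩ | ⟨h, -⟩
  · exact (min_le_right _ _).trans (by linarith)
  · exact (min_le_left _ _).trans (by linarith)


noncomputable def dynamicStepSize (f : E → ℝ) (L ρ : ℝ) (x s : E) : ℝ :=
  |f (x + ρ • s) - f (x - ρ • s)| / (2 * ρ * L * ‖s‖ ^ 2)

theorem min_dynamicStepSize_le (hf : Differentiable ℝ f)
    (hlip : ∀ x y, ‖gradient f x - gradient f y‖ ≤ L * ‖x - y‖) (hL : 0 < L) {x s : E}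
    (hs : s ≠ 0) {ρ : ℝ} (hρ : 0 < ρ) :
    min (f (x + dynamicStepSize f L ρ x s • s)) (f (x - dynamicStepSize f L ρ x s • s)) ≤
      f x - ⟪gradient f x, s⟫ ^ 2 / (2 * L * ‖s‖ ^ 2) + L * ‖s‖ ^ 2 * ρ ^ 2 / 8 := by
  set c := L * ‖s‖ ^ 2
  have hc : 0 < c := by positivity
  have hα : dynamicStepSize f L ρ x s = |f (x + ρ • s) - f (x - ρ • s)| / (2 * ρ * c) := by
    rw [dynamicStepSize, mul_assoc (2 * ρ)]
  have hα₀ : 0 ≤ dynamicStepSize f L ρ x s := by rw [hα]; positivity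
  calc min (f (x + dynamicStepSize f L ρ x s • s)) (f (x - dynamicStepSize f L ρ x s • s))
      ≤ f x - |dynamicStepSize f L ρ x s * ⟪gradient f x, s⟫|
          + L / 2 * dynamicStepSize f L ρ x s ^ 2 * ‖s‖ ^ 2 :=
        min_le_sub_abs_mul_inner_gradient hf hlip x s _
    _ = f x + (-(|f (x + ρ • s) - f (x - ρ • s)| / (2 * ρ * c) * |⟪gradient f x, s⟫|)
          + c / 2 * (|f (x + ρ • s) - f (x - ρ • s)| / (2 * ρ * c)) ^ 2) := by
        rw [abs_mul, abs_of_nonneg hα₀, ← hα]; ring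
    _ ≤ f x + (c * ρ ^ 2 / 8 - ⟪gradient f x, s⟫ ^ 2 / (2 * c)) := by
        gcongr
        exact neg_mul_abs_add_half_mul_sq_le hρ hc
          ((abs_sub_sub_two_mul_inner_gradient_le hf hlip x s ρ).trans_eq (by ring))
    _ = f x - ⟪gradient f x, s⟫ ^ 2 / (2 * L * ‖s‖ ^ 2) + L * ‖s‖ ^ 2 * ρ ^ 2 / 8 := by
        rw [mul_assoc 2 L]; ring

end Smooth

@[simp]
theorem signVec_apply {d : ℕ} (e : Fin d → Bool) (i : Fin d) :
    signVec e i = if e i then 1 else -1 := rfl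

theorem sum_signVec_mul_signVec {d : ℕ} (i j : Fin d) :
    ∑ e : Fin d → Bool, signVec e i * signVec e j = if i = j then 2 ^ d else 0 := by
  split_ifs with hij
  · subst hij
    have hsq : ∀ e : Fin d → Bool, signVec e i * signVec e i = 1 := fun e => by
      cases h : e i <;> simp [h]
    simp only [hsq, Finset.sum_const, Finset.card_univ, Fintype.card_fun, Fintype.card_bool,
      Fintype.card_fin, nsmul_eq_mul, mul_one, Nat.cast_pow, Nat.cast_ofNat]
  · -- Splitting off coordinate `i`, the sum factors through `∑ b : Bool, ±1 = 0`.
    let G : Bool × ({k // k ≠ i} → Bool) → ℝ := fun p =>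
      (if p.1 then 1 else -1) * (if p.2 ⟨j, Ne.symm hij⟩ then 1 else -1)
    calc ∑ e : Fin d → Bool, signVec e i * signVec e j
        = ∑ e, G (Equiv.funSplitAt i Bool e) := rfl
      _ = ∑ p, G p := (Equiv.funSplitAt i Bool).sum_comp G
      _ = 0 := by
        simp only [G, Fintype.sum_prod_type, ← Finset.mul_sum, Fintype.sum_bool, if_true,
          Bool.false_eq_true, if_false]
        ring

theorem norm_signVec_sq {d : ℕ} (e : Fin d → Bool) : ‖signVec e‖ ^ 2 = d := by
  simp [EuclideanSpace.norm_sq_eq]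

theorem sum_inner_signVec_sq {d : ℕ} (g : EuclideanSpace ℝ (Fin d)) :
    ∑ e : Fin d → Bool, ⟪g, signVec e⟫ ^ 2 = 2 ^ d * ‖g‖ ^ 2 := by
  have hexp : ∀ e : Fin d → Bool,
      ⟪g, signVec e⟫ ^ 2 = ∑ i, ∑ j, g i * g j * (signVec e i * signVec e j) := fun e => by
    simp only [PiLp.inner_apply, RCLike.inner_apply, conj_trivial, sq, Finset.sum_mul_sum]
    exact Finset.sum_congr rfl fun i _ => Finset.sum_congr rfl fun j _ => by ring
  calc ∑ e : Fin d → Bool, ⟪g, signVec e⟫ ^ 2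
      = ∑ i, ∑ j, g i * g j * ∑ e : Fin d → Bool, signVec e i * signVec e j := by
        simp_rw [hexp, Finset.mul_sum]
        rw [Finset.sum_comm]
        exact Finset.sum_congr rfl fun i _ => Finset.sum_comm
    _ = 2 ^ d * ‖g‖ ^ 2 := by
        simp only [sum_signVec_mul_signVec, mul_ite, mul_zero, Finset.sum_ite_eq, Finset.mem_univ,
          if_true]
        rw [EuclideanSpace.norm_sq_eq, Finset.mul_sum]
        exact Finset.sum_congr rfl fun i _ => by rw [Real.norm_eq_abs, sq_abs]; ring

/-- one-step descent inequality of S2P with the dynamic step size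
`α(s) = |f(x + ρs) − f(x − ρs)|/(2ρLd)` under general smoothness:
`E[min(f(x + α(s)s), f(x − α(s)s))] ≤ f(x) − ‖∇f(x)‖²/(4Ld) + L d ρ²/8`,
the expectation being the uniform average over all `2^d` Rademacher vectors. -/
theorem stmt6 (d : ℕ) (hd : 1 ≤ d) (f : EuclideanSpace ℝ (Fin d) → ℝ) (L : ℝ) (hL : 0 < L)
    (hdiff : Differentiable ℝ f)
    (hlip : ∀ x y : EuclideanSpace ℝ (Fin d),
      ‖gradient f x - gradient f y‖ ≤ L * ‖x - y‖)
    (x : EuclideanSpace ℝ (Fin d)) (ρ : ℝ) (hρ : 0 < ρ) :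
    (∑ e : Fin d → Bool,
        min (f (x + (|f (x + ρ • signVec e) - f (x - ρ • signVec e)| / (2 * ρ * L * d)) • signVec e))
            (f (x - (|f (x + ρ • signVec e) - f (x - ρ • signVec e)| / (2 * ρ * L * d)) • signVec e)))
        / (2 : ℝ) ^ d
      ≤ f x - ‖gradient f x‖ ^ 2 / (4 * L * d) + L * d * ρ ^ 2 / 8 := by
  have hd' : (0 : ℝ) < d := by exact_mod_cast hd
  have hs : ∀ e : Fin d → Bool, signVec e ≠ 0 := fun e h => by
    simpa [h, hd'.ne] using norm_signVec_sq e
  calc _ ≤ (∑ e : Fin d → Bool, (f x - ⟪gradient f x, signVec e⟫ ^ 2 / (2 * L * d)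
          + L * d * ρ ^ 2 / 8)) / 2 ^ d := by
        gcongr with e
        simpa only [dynamicStepSize, norm_signVec_sq] using
          min_dynamicStepSize_le hdiff hlip hL (hs e) hρ
    _ = f x - ‖gradient f x‖ ^ 2 / (2 * L * d) + L * d * ρ ^ 2 / 8 := by
        rw [Finset.sum_add_distrib, Finset.sum_sub_distrib, ← Finset.sum_div, sum_inner_signVec_sq]
        simp only [Finset.sum_const, Finset.card_univ, Fintype.card_fun, Fintype.card_bool,
          Fintype.card_fin, nsmul_eq_mul, Nat.cast_pow, Nat.cast_ofNat]
        field_simp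
    _ ≤ f x - ‖gradient f x‖ ^ 2 / (4 * L * d) + L * d * ρ ^ 2 / 8 := by
        gcongr
        linarith
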